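/- Let α ≥ 3 be an integer and let β₁ = (3α − 1)/2. If β ≥ β₁ is a real number with t_S(α,β) ≤ t_P(α,β), then t_S(α,β') ≤ t_P(α,β') for all real β' ≥ β. -/
import Mathlib


/-- `ŝ(α,β) = ⌊√((2β + α + 1)/(4α))⌋`. -/
noncomputable def sHat (α : ℤ) (β : ℝ) : ℤ :=
  ⌊Real.sqrt ((2 * β + (α : ℝ) + 1) / (4 * (α : ℝ)))⌋

/-- `t_S(α,β) = 1 + α·ŝ(α,β) + (β + 1/2)/(2ŝ(α,β) + 1) - 1/2`, the continuous variant of the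
PSD-throttling number of the balanced spider `T_{α,β}`. -/
noncomputable def tS (α : ℤ) (β : ℝ) : ℝ :=
  1 + (α : ℝ) * (sHat α β : ℝ) + (β + 1 / 2) / (2 * (sHat α β : ℝ) + 1) - 1 / 2

/-- `t_P(α,β) = √(2(αβ + 1) + 1/4) - 1/2`, the continuous variant of the PSD-throttling
number of the path on `αβ + 1` vertices. -/
noncomputable def tP (α : ℤ) (β : ℝ) : ℝ :=
  Real.sqrt (2 * ((α : ℝ) * β + 1) + 1 / 4) - 1 / 2

/-- A concave (leading coefficient `-1`) quadratic that is nonnegative at two points is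
nonnegative in between. -/
lemma quad_between (b c p e x : ℝ) (hpx : p ≤ x) (hxe : x ≤ e)
    (hp : 0 ≤ -p ^ 2 + b * p + c) (he : 0 ≤ -e ^ 2 + b * e + c) :
    0 ≤ -x ^ 2 + b * x + c := by
  rcases eq_or_lt_of_le (hpx.trans hxe) with heq | hlt
  · have hxp : x = p := le_antisymm (heq ▸ hxe) hpx
    simpa [hxp] using hp
  · have hpe : (0:ℝ) < e - p := by linarith
    have key : (e - p) * (-x ^ 2 + b * x + c)
        = (e - x) * (-p ^ 2 + b * p + c) + (x - p) * (-e ^ 2 + b * e + c)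
          + (x - p) * ((e - x) * (e - p)) := by ring
    nlinarith [mul_nonneg (by linarith : (0:ℝ) ≤ e - x) hp,
      mul_nonneg (by linarith : (0:ℝ) ≤ x - p) he,
      mul_nonneg (by linarith : (0:ℝ) ≤ x - p)
        (mul_nonneg (by linarith : (0:ℝ) ≤ e - x) hpe.le), hpe]

/-- Bounds for the floor of a square root. -/
lemma floor_sqrt_bounds (r : ℝ) (hr : 1 ≤ r) :
    1 ≤ ⌊Real.sqrt r⌋ ∧ ((⌊Real.sqrt r⌋ : ℤ) : ℝ) ^ 2 ≤ r ∧
      r ≤ (((⌊Real.sqrt r⌋ : ℤ) : ℝ) + 1) ^ 2 := by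
  have hr0 : (0:ℝ) ≤ r := by linarith
  have h1 : (1:ℝ) ≤ Real.sqrt r := by
    calc (1:ℝ) = Real.sqrt 1 := Real.sqrt_one.symm
      _ ≤ _ := Real.sqrt_le_sqrt hr
  have hfl : ((⌊Real.sqrt r⌋ : ℤ) : ℝ) ≤ Real.sqrt r := Int.floor_le _
  have hfu : Real.sqrt r < ((⌊Real.sqrt r⌋ : ℤ) : ℝ) + 1 := Int.lt_floor_add_one _
  have hs1 : 1 ≤ ⌊Real.sqrt r⌋ := Int.le_floor.mpr (by exact_mod_cast h1)
  have hc1 : (1:ℝ) ≤ ((⌊Real.sqrt r⌋ : ℤ) : ℝ) := by exact_mod_cast hs1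
  have hsq : Real.sqrt r ^ 2 = r := Real.sq_sqrt hr0
  refine ⟨hs1, ?_, ?_⟩
  · nlinarith [Real.sqrt_nonneg r]
  · nlinarith [Real.sqrt_nonneg r]

/-- The key real-variable inequality. -/
lemma main_ineq (a m x : ℝ) (ha : 3 ≤ a) (hm : 1 ≤ m)
    (hL : 4 * a * m ^ 2 ≤ 2 * x + a + 1) (hR : 2 * x + a + 1 ≤ 4 * a * (m + 1) ^ 2)
    (hextra : 2 ≤ m ∨ (m = 1 ∧ ∃ p, (3 * a - 1) / 2 ≤ p ∧ p ≤ x ∧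
      (1 + a * m + (p + 1 / 2) / (2 * m + 1)) ^ 2 ≤ 2 * (a * p + 1) + 1 / 4)) :
    (1 + a * m + (x + 1 / 2) / (2 * m + 1)) ^ 2 ≤ 2 * (a * x + 1) + 1 / 4 := by
  have hu : (0:ℝ) < 2 * m + 1 := by linarith
  have hQ : 0 ≤ -x ^ 2 + (2 * a * (2 * m + 1) ^ 2 - 2 * (1 + a * m) * (2 * m + 1) - 1) * x
      + (9 / 4 * (2 * m + 1) ^ 2 - ((1 + a * m) * (2 * m + 1) + 1 / 2) ^ 2) := by
    rcases hextra with hm2 | ⟨hm1, p, hp1, hpx, hsq⟩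
    · refine quad_between _ _ ((4 * a * m ^ 2 - a - 1) / 2) ((4 * a * (m + 1) ^ 2 - a - 1) / 2)
        x (by linarith) (by linarith) ?_ ?_
      · have heq : -((4 * a * m ^ 2 - a - 1) / 2) ^ 2
            + (2 * a * (2 * m + 1) ^ 2 - 2 * (1 + a * m) * (2 * m + 1) - 1)
              * ((4 * a * m ^ 2 - a - 1) / 2)
            + (9 / 4 * (2 * m + 1) ^ 2 - ((1 + a * m) * (2 * m + 1) + 1 / 2) ^ 2)
            = (2 * m + 1) ^ 2 * (8 * a * m * (a - 2) - 5 * a ^ 2 + 5) / 4 := by ring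
        rw [heq]
        have h1 : (0:ℝ) ≤ 8 * a * m * (a - 2) - 5 * a ^ 2 + 5 := by
          nlinarith [mul_nonneg (by nlinarith : (0:ℝ) ≤ 8 * a * (a - 2))
            (by linarith : (0:ℝ) ≤ m - 2), sq_nonneg (a - 3)]
        exact div_nonneg (mul_nonneg (sq_nonneg _) h1) (by norm_num)
      · have heq : -((4 * a * (m + 1) ^ 2 - a - 1) / 2) ^ 2
            + (2 * a * (2 * m + 1) ^ 2 - 2 * (1 + a * m) * (2 * m + 1) - 1)
              * ((4 * a * (m + 1) ^ 2 - a - 1) / 2)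
            + (9 / 4 * (2 * m + 1) ^ 2 - ((1 + a * m) * (2 * m + 1) + 1 / 2) ^ 2)
            = (2 * m + 1) ^ 2 * (8 * a * m * (a - 2) + 3 * a ^ 2 - 16 * a + 5) / 4 := by ring
        rw [heq]
        have h1 : (0:ℝ) ≤ 8 * a * m * (a - 2) + 3 * a ^ 2 - 16 * a + 5 := by
          nlinarith [mul_nonneg (by nlinarith : (0:ℝ) ≤ 8 * a * (a - 2))
            (by linarith : (0:ℝ) ≤ m - 1), sq_nonneg (a - 3)]
        exact div_nonneg (mul_nonneg (sq_nonneg _) h1) (by norm_num)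
    · subst hm1
      refine quad_between _ _ p ((4 * a * ((1:ℝ) + 1) ^ 2 - a - 1) / 2) x hpx
        (by linarith) ?_ ?_
      · have heq : -p ^ 2 + (2 * a * (2 * 1 + 1) ^ 2 - 2 * (1 + a * 1) * (2 * 1 + 1) - 1) * p
            + (9 / 4 * (2 * 1 + 1) ^ 2 - ((1 + a * 1) * (2 * 1 + 1) + 1 / 2) ^ 2)
            = 9 * ((2 * (a * p + 1) + 1 / 4)
              - (1 + a * 1 + (p + 1 / 2) / (2 * 1 + 1)) ^ 2) := by ring
        rw [heq]; linarith
      · have heq : -((4 * a * ((1:ℝ) + 1) ^ 2 - a - 1) / 2) ^ 2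
            + (2 * a * (2 * 1 + 1) ^ 2 - 2 * (1 + a * 1) * (2 * 1 + 1) - 1)
              * ((4 * a * ((1:ℝ) + 1) ^ 2 - a - 1) / 2)
            + (9 / 4 * (2 * 1 + 1) ^ 2 - ((1 + a * 1) * (2 * 1 + 1) + 1 / 2) ^ 2)
            = 9 * (11 * a ^ 2 - 32 * a + 5) / 4 := by ring
        rw [heq]
        nlinarith [sq_nonneg (a - 3)]
  have e1 : 1 + a * m + (x + 1 / 2) / (2 * m + 1)
      = ((1 + a * m) * (2 * m + 1) + (x + 1 / 2)) / (2 * m + 1) := by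
    field_simp
  rw [e1, div_pow, div_le_iff₀ (by positivity)]
  nlinarith [hQ]

set_option maxHeartbeats 1000000 in
/-- If `α ≥ 3` and `t_S(α,β) ≤ t_P(α,β)` for some `β ≥ β₁ = (3α-1)/2`, then
`t_S(α,β') ≤ t_P(α,β')` for all `β' ≥ β`. -/
theorem stmt14 (α : ℤ) (hα : 3 ≤ α) (β : ℝ) (hβ : (3 * (α : ℝ) - 1) / 2 ≤ β)
    (h : tS α β ≤ tP α β) :
    ∀ β' : ℝ, β ≤ β' → tS α β' ≤ tP α β' := by
  intro β' hbb
  have ha : (3:ℝ) ≤ (α : ℝ) := by exact_mod_cast hα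
  have ha0 : (0:ℝ) < 4 * (α : ℝ) := by linarith
  have hβ' : (3 * (α : ℝ) - 1) / 2 ≤ β' := hβ.trans hbb
  -- floor bounds at β'
  have hr1 : (1:ℝ) ≤ (2 * β' + (α : ℝ) + 1) / (4 * (α : ℝ)) := by
    rw [le_div_iff₀ ha0]; linarith
  obtain ⟨hs1, hlow, hhigh⟩ := floor_sqrt_bounds _ hr1
  rw [div_le_iff₀ ha0] at hhigh
  rw [le_div_iff₀ ha0] at hlow
  have hs1' : (1:ℝ) ≤ ((sHat α β' : ℤ) : ℝ) := by
    rw [sHat]; exact_mod_cast hs1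
  have hL : 4 * (α : ℝ) * ((sHat α β' : ℤ) : ℝ) ^ 2 ≤ 2 * β' + (α : ℝ) + 1 := by
    rw [sHat]; nlinarith [hlow]
  have hR : 2 * β' + (α : ℝ) + 1 ≤ 4 * (α : ℝ) * (((sHat α β' : ℤ) : ℝ) + 1) ^ 2 := by
    rw [sHat]; nlinarith [hhigh]
  -- the extra hypothesis
  have hextra : 2 ≤ ((sHat α β' : ℤ) : ℝ) ∨ (((sHat α β' : ℤ) : ℝ) = 1 ∧ ∃ p,
      (3 * (α : ℝ) - 1) / 2 ≤ p ∧ p ≤ β' ∧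
      (1 + (α : ℝ) * ((sHat α β' : ℤ) : ℝ)
        + (p + 1 / 2) / (2 * ((sHat α β' : ℤ) : ℝ) + 1)) ^ 2
        ≤ 2 * ((α : ℝ) * p + 1) + 1 / 4) := by
    have hs1i : 1 ≤ sHat α β' := by
      rw [sHat]; exact hs1
    by_cases hc : 2 ≤ sHat α β'
    · left; exact_mod_cast hc
    · right
      have hme : sHat α β' = 1 := le_antisymm (by omega) hs1i
      have hme' : ((sHat α β' : ℤ) : ℝ) = 1 := by rw [hme]; norm_num
      refine ⟨hme', β, hβ, hbb, ?_⟩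
      -- sHat α β = 1
      have hrβ1 : (1:ℝ) ≤ (2 * β + (α : ℝ) + 1) / (4 * (α : ℝ)) := by
        rw [le_div_iff₀ ha0]; linarith
      obtain ⟨hsβ1, _, _⟩ := floor_sqrt_bounds _ hrβ1
      have hsβ1' : 1 ≤ sHat α β := by rw [sHat]; exact hsβ1
      have hmono : sHat α β ≤ sHat α β' := by
        apply Int.floor_le_floor
        apply Real.sqrt_le_sqrt
        rw [div_le_div_iff₀ ha0 ha0]
        nlinarith
      have hsβ : sHat α β = 1 := le_antisymm (by omega) hsβ1'
      -- squared inequality at β from the hypothesis h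
      have hDβ : (0:ℝ) ≤ 2 * ((α : ℝ) * β + 1) + 1 / 4 := by nlinarith
      have hTβ : 1 + (α : ℝ) * 1 + (β + 1 / 2) / (2 * 1 + 1)
          ≤ Real.sqrt (2 * ((α : ℝ) * β + 1) + 1 / 4) := by
        have h2 := h
        rw [tS, tP, hsβ] at h2
        push_cast at h2
        linarith
      have hTβ0 : (0:ℝ) ≤ 1 + (α : ℝ) * 1 + (β + 1 / 2) / (2 * 1 + 1) := by
        have hd : (0:ℝ) ≤ (β + 1 / 2) / (2 * 1 + 1) := div_nonneg (by linarith) (by norm_num)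
        linarith
      have hsqβ : (1 + (α : ℝ) * 1 + (β + 1 / 2) / (2 * 1 + 1)) ^ 2
          ≤ 2 * ((α : ℝ) * β + 1) + 1 / 4 := by
        nlinarith [Real.sq_sqrt hDβ, Real.sqrt_nonneg (2 * ((α : ℝ) * β + 1) + 1 / 4)]
      rw [hme']
      exact hsqβ
  have hT2 := main_ineq (α : ℝ) ((sHat α β' : ℤ) : ℝ) β' ha hs1' hL hR hextra
  have hT0 : (0:ℝ) ≤ 1 + (α : ℝ) * ((sHat α β' : ℤ) : ℝ)
      + (β' + 1 / 2) / (2 * ((sHat α β' : ℤ) : ℝ) + 1) := by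
    have hd : (0:ℝ) ≤ (β' + 1 / 2) / (2 * ((sHat α β' : ℤ) : ℝ) + 1) :=
      div_nonneg (by linarith) (by linarith)
    nlinarith
  have hD : (0:ℝ) ≤ 2 * ((α : ℝ) * β' + 1) + 1 / 4 := by nlinarith
  have hfin : 1 + (α : ℝ) * ((sHat α β' : ℤ) : ℝ)
      + (β' + 1 / 2) / (2 * ((sHat α β' : ℤ) : ℝ) + 1)
      ≤ Real.sqrt (2 * ((α : ℝ) * β' + 1) + 1 / 4) := (Real.le_sqrt hT0 hD).2 hT2
  rw [tS, tP]
  linarith [hfin]
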